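/- arXiv:math/0308021 — 4 statements merged into one kernel-verified Lean document; each statement's English description precedes it below -/
import Mathlib

section
/- The sequence τ_j = 1 - (∏_{k=0}^{j-2} (2^{2^k} - 1))/(2^{2^{j-1}} + 1) is strictly increasing in j ≥ 1. -/
/-! With `P = ∏_{k<m} (2^{2^k} - 1)` and `a = 2^{2^m}`, one has `τ_{m+1} = 1 - P/(a+1)` and
`τ_{m+2} = 1 - P(a-1)/(a²+1)`, so `τ_{m+1} < τ_{m+2}` amounts to `(a-1)(a+1) = a² - 1 < a² + 1`. -/

section

variable {K : Type*} [Field K] [LinearOrder K] [IsStrictOrderedRing K]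

theorem mul_sub_one_div_sq_add_one_lt {P a : K} (hP : 0 < P) (ha : 0 < a + 1) :
    P * (a - 1) / (a ^ 2 + 1) < P / (a + 1) := by
  rw [div_lt_div_iff₀ (by positivity) ha]
  nlinarith

theorem prod_two_pow_two_pow_sub_one_pos (m : ℕ) :
    0 < ∏ k ∈ Finset.range m, ((2 : K) ^ (2 ^ k) - 1) :=
  Finset.prod_pos fun k _ ↦ sub_pos.2 (one_lt_pow₀ one_lt_two (by positivity))

end

theorem stmt_3 (τ : ℕ → ℚ)
    (hτ : ∀ j ≥ 1, τ j =
      1 - (∏ k ∈ Finset.range (j - 1), ((2 : ℚ) ^ (2 ^ k) - 1)) / (2 ^ (2 ^ (j - 1)) + 1)) :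
    ∀ i j, 1 ≤ i → i < j → τ i < τ j := by
  have hstep (m : ℕ) : τ (m + 1) < τ (m + 1 + 1) := by
    rw [hτ (m + 1) (by omega), hτ (m + 1 + 1) (by omega), Nat.add_sub_cancel, Nat.add_sub_cancel,
      Finset.prod_range_succ, pow_succ 2 m, pow_mul]
    exact sub_lt_sub_left
      (mul_sub_one_div_sq_add_one_lt (prod_two_pow_two_pow_sub_one_pos m) (by positivity)) 1
  have hmono : StrictMono fun n ↦ τ (n + 1) := strictMono_nat_of_lt_succ hstep
  intro i j hi hij
  obtain ⟨i, rfl⟩ : ∃ i', i = i' + 1 := ⟨i - 1, by omega⟩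
  obtain ⟨j, rfl⟩ : ∃ j', j = j' + 1 := ⟨j - 1, by omega⟩
  exact hmono (by omega)
end

section
/- For every j ≥ 1, the numerator and denominator of τ_j are coprime; that is, gcd(p_j, q_j) = 1 where p_1 = 2, q_1 = 3 and p_{j+1} = 2 + (2^{2^{j-1}}-1)p_j, q_{j+1} = 2 + (2^{2^{j-1}}-1)q_j. -/
theorem stmt_6 (p q : ℕ → ℕ) (hp1 : p 1 = 2) (hq1 : q 1 = 3)
    (hp : ∀ j ≥ 1, p (j + 1) = 2 + (2 ^ (2 ^ (j - 1)) - 1) * p j)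
    (hq : ∀ j ≥ 1, q (j + 1) = 2 + (2 ^ (2 ^ (j - 1)) - 1) * q j) :
    ∀ j ≥ 1, Nat.gcd (p j) (q j) = 1 := by
  suffices H : ∀ j ≥ 1, Nat.gcd (p j) (q j) = 1 ∧ p j % 2 = 0 ∧ q j % 2 = 1 ∧ p j ≤ q j ∧
      ∀ r : ℕ, r.Prime → r ∣ (q j - p j) → r ∣ (2 ^ (2 ^ (j - 1)) - 1) by
    intro j hj; exact (H j hj).1
  intro j hj
  induction j, hj using Nat.le_induction with
  | base =>
    refine ⟨by simp [hp1, hq1], by simp [hp1], by simp [hq1], by simp [hp1, hq1], ?_⟩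
    intro r hr hd
    simp [hp1, hq1] at hd
    simpa using hd
  | succ j hj ih =>
    obtain ⟨hg, hpe, hqo, hle, hdiv⟩ := ih
    set m := 2 ^ (2 ^ (j - 1)) - 1 with hm
    have hP : p (j + 1) = 2 + m * p j := hp j hj
    have hQ : q (j + 1) = 2 + m * q j := hq j hj
    -- m is odd
    have hmexp : 1 ≤ 2 ^ (j - 1) := Nat.one_le_two_pow
    have h2 : 2 ≤ 2 ^ (2 ^ (j - 1)) := by
      calc 2 = 2 ^ 1 := by norm_num
      _ ≤ 2 ^ (2 ^ (j - 1)) := Nat.pow_le_pow_right (by norm_num) hmexp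
    have hme : (2 ^ (2 ^ (j - 1))) % 2 = 0 := by
      have : (2:ℕ) ∣ 2 ^ (2 ^ (j - 1)) := dvd_pow_self 2 (by omega)
      omega
    have hmo : m % 2 = 1 := by omega
    -- m divides m' = 2^(2^j) - 1
    have hsimp : (j + 1) - 1 = j := by omega
    have hmm' : m ∣ 2 ^ (2 ^ j) - 1 := by
      have h1 : 2 ^ j = 2 ^ (j - 1) * 2 := by
        rw [← pow_succ]
        congr 1
        omega
      have h2' : (2 : ℕ) ^ (2 ^ j) = (2 ^ (2 ^ (j - 1))) ^ 2 := by
        rw [h1, pow_mul]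
      rw [h2']
      have := Nat.sub_dvd_pow_sub_pow (2 ^ (2 ^ (j - 1))) 1 2
      simpa using this
    -- difference
    have hdiff : q (j + 1) - p (j + 1) = m * (q j - p j) := by
      rw [hP, hQ, Nat.mul_sub]
      omega
    -- parity of p(j+1), q(j+1)
    have hpe' : p (j + 1) % 2 = 0 := by
      rw [hP]
      have : (m * p j) % 2 = 0 := by
        rw [Nat.mul_mod, hpe]
        simp
      omega
    have hqo' : q (j + 1) % 2 = 1 := by
      rw [hQ]
      have : (m * q j) % 2 = 1 := by
        rw [Nat.mul_mod, hqo, hmo]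
      omega
    have hle' : p (j + 1) ≤ q (j + 1) := by
      rw [hP, hQ]
      have := Nat.mul_le_mul_left m hle
      omega
    -- prime divisor condition
    have hdiv' : ∀ r : ℕ, r.Prime → r ∣ (q (j + 1) - p (j + 1)) →
        r ∣ (2 ^ (2 ^ ((j + 1) - 1)) - 1) := by
      intro r hr hd
      rw [hdiff] at hd
      rw [hsimp]
      rcases (Nat.Prime.dvd_mul hr).mp hd with h | h
      · exact h.trans hmm'
      · exact (hdiv r hr h).trans hmm'
    refine ⟨?_, hpe', hqo', hle', hdiv'⟩
    -- gcd = 1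
    by_contra hne
    set g := Nat.gcd (p (j + 1)) (q (j + 1)) with hg'
    have hgpos : 0 < g := Nat.gcd_pos_of_pos_left _ (by omega)
    have hg1 : g ≠ 1 := hne
    set r := g.minFac with hr'
    have hrp : r.Prime := Nat.minFac_prime hg1
    have hrg : r ∣ g := Nat.minFac_dvd g
    have hrp' : r ∣ p (j + 1) := hrg.trans (Nat.gcd_dvd_left _ _)
    have hrq' : r ∣ q (j + 1) := hrg.trans (Nat.gcd_dvd_right _ _)
    have hrd : r ∣ q (j + 1) - p (j + 1) := Nat.dvd_sub hrq' hrp'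
    have hrm : r ∣ m := by
      rw [hdiff] at hrd
      rcases (Nat.Prime.dvd_mul hrp).mp hrd with h | h
      · exact h
      · exact hdiv r hrp h
    have hr2 : r ∣ 2 := by
      have h1 : r ∣ m * p j := hrm.mul_right _
      have h2 : p (j + 1) - m * p j = 2 := by omega
      have := Nat.dvd_sub hrp' h1
      rwa [h2] at this
    have : r = 2 := (Nat.prime_dvd_prime_iff_eq hrp Nat.prime_two).mp hr2
    rw [this] at hrq'
    omega
end

section
/- The power series expansion of Ξ(z) = ∏_{n=0}^∞ (1 - z^{2^n}) on the open unit disk has k-th coefficient ε_k = 1 - 2·t_k for k ≥ 1 (and constant term 1), where t_k is the Thue-Morse sequence (parity of binary digit sum of k); equivalently, Ξ(z) = ∑_{k=0}^∞ (-1)^{s(k)} z^k where s(k) is the binary digit sum of k. -/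
/-!
Expanding `∏_{n<N} (1 - x^{2^n})` chooses, for each `k < 2^N`, the factors indexed by the binary
digits of `k`, with sign `(-1)^{s(k)}`. So the partial products are exactly the partial sums of
the series up to `2^N`, and the product and the series are limits of the same sequence.
-/

open Finset

theorem Nat.digits_sum_add_base_pow_mul {b N n : ℕ} (hb : 1 < b) (hn : n < b ^ N) (m : ℕ) :
    (b.digits (n + b ^ N * m)).sum = (b.digits n).sum + (b.digits m).sum := by
  rcases Nat.eq_zero_or_pos m with rfl | hm
  · simp
  have hlen : (b.digits n).length ≤ N := (Nat.digits_length_le_iff hb n).mpr hn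
  rw [← Nat.add_sub_cancel' hlen, ← Nat.digits_append_zeroes_append_digits hb hm]
  simp

theorem prod_range_one_sub_pow_two_pow {R : Type*} [CommRing R] (x : R) (N : ℕ) :
    ∏ n ∈ range N, (1 - x ^ 2 ^ n) =
      ∑ k ∈ range (2 ^ N), (-1 : R) ^ (Nat.digits 2 k).sum * x ^ k := by
  induction N with
  | zero => simp
  | succ N ih =>
    have hsign : ∀ k ∈ range (2 ^ N),
        (-1 : R) ^ (Nat.digits 2 (2 ^ N + k)).sum * x ^ (2 ^ N + k) =
          -x ^ 2 ^ N * ((-1 : R) ^ (Nat.digits 2 k).sum * x ^ k) := by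
      intro k hk
      rw [add_comm (2 ^ N) k, ← mul_one (2 ^ N),
        Nat.digits_sum_add_base_pow_mul one_lt_two (mem_range.mp hk)]
      simp only [mul_one, Nat.digits_of_lt 2 1 one_ne_zero one_lt_two, List.sum_singleton]
      ring
    rw [prod_range_succ, ih, pow_succ, mul_two, sum_range_add, sum_congr rfl hsign, ← mul_sum]
    ring

variable {R : Type*} [NormedCommRing R] [CompleteSpace R] {x : R}

theorem multipliable_one_sub_pow_two_pow [NormOneClass R] (hx : ‖x‖ < 1) :
    Multipliable fun n : ℕ ↦ 1 - x ^ 2 ^ n := by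
  simp_rw [sub_eq_add_neg]
  refine multipliable_one_add_of_summable <|
    (summable_geometric_of_lt_one (norm_nonneg x) hx).of_nonneg_of_le (fun _ ↦ norm_nonneg _)
      fun n ↦ ?_
  rw [norm_neg]
  exact (norm_pow_le x _).trans <|
    pow_le_pow_of_le_one (norm_nonneg x) hx.le Nat.lt_two_pow_self.le

theorem summable_neg_one_pow_digits_sum_mul_pow (hx : ‖x‖ < 1) :
    Summable fun k : ℕ ↦ (-1 : R) ^ (Nat.digits 2 k).sum * x ^ k := by
  refine Summable.of_norm_bounded (summable_norm_geometric_of_norm_lt_one hx) fun k ↦ ?_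
  rcases neg_one_pow_eq_or R (Nat.digits 2 k).sum with h | h <;> simp [h]

theorem tprod_one_sub_pow_two_pow [NormOneClass R] (hx : ‖x‖ < 1) :
    ∏' n : ℕ, (1 - x ^ 2 ^ n) = ∑' k : ℕ, (-1 : R) ^ (Nat.digits 2 k).sum * x ^ k := by
  have hprod := (multipliable_one_sub_pow_two_pow hx).hasProd.tendsto_prod_nat
  have hsum := (summable_neg_one_pow_digits_sum_mul_pow hx).hasSum.tendsto_sum_nat.comp
    (tendsto_pow_atTop_atTop_of_one_lt one_lt_two)
  simp_rw [prod_range_one_sub_pow_two_pow] at hprod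
  exact tendsto_nhds_unique hprod hsum

theorem stmt_12 :
    ∀ z : ℂ, ‖z‖ < 1 →
      ∏' n : ℕ, (1 - z ^ 2 ^ n) =
        ∑' k : ℕ, (-1 : ℂ) ^ (Nat.digits 2 k).sum * z ^ k :=
  fun _ ↦ tprod_one_sub_pow_two_pow
end

section
/- Let T : [0,1] → [0,1] be the tent map T(x) = 2x for x < 1/2 and T(x) = 2(1-x) for x ≥ 1/2. If s = s_1 s_2 s_3 ... ∈ {0,1}^ℕ and τ(s) = ∑_{k≥1} t_k 2^{-k} with t_k = (s_1 + ... + s_k) mod 2, then τ(σ(s)) = T(τ(s)), where σ is the left shift. -/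
/-!
Write `τ(s) = ∑ₖ tₖ 2⁻ᵏ` as `t₁/2 + B/2`, where `B` is the binary number with digits `t₂ t₃ …`.
If `s₁` is even, the parities of `σs` are `t₂ t₃ …`, so `τ(σs) = B`, while `τ(s) = B/2 ≤ 1/2`.
If `s₁` is odd, they are the complementary digits, so `τ(σs) = 1 - B`, while `τ(s) = (1 + B)/2 ≥ 1/2`.
In both cases this is `T(τ(s))`.
-/

open Finset

noncomputable def binaryValue (a : ℕ → ℕ) : ℝ := ∑' k, (a k : ℝ) / 2 ^ (k + 1)

section BinaryValue

variable {a : ℕ → ℕ}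

lemma summable_geometric_two_succ : Summable fun k : ℕ => (1 / 2 : ℝ) ^ (k + 1) :=
  summable_geometric_two.comp_injective Nat.succ_injective

lemma tsum_geometric_two_succ : ∑' k : ℕ, (1 / 2 : ℝ) ^ (k + 1) = 1 := by
  simp_rw [pow_succ', tsum_mul_left, tsum_geometric_two]
  norm_num

lemma digit_div_two_pow_le (ha : ∀ k, a k ≤ 1) (k : ℕ) :
    (a k : ℝ) / 2 ^ (k + 1) ≤ (1 / 2 : ℝ) ^ (k + 1) := by
  rw [div_pow, one_pow]
  gcongr
  exact_mod_cast ha k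

lemma summable_binaryValue (ha : ∀ k, a k ≤ 1) :
    Summable fun k => (a k : ℝ) / 2 ^ (k + 1) :=
  .of_nonneg_of_le (fun _ => by positivity) (digit_div_two_pow_le ha) summable_geometric_two_succ

lemma binaryValue_nonneg (a : ℕ → ℕ) : 0 ≤ binaryValue a :=
  tsum_nonneg fun _ => by positivity

lemma binaryValue_le_one (ha : ∀ k, a k ≤ 1) : binaryValue a ≤ 1 :=
  tsum_geometric_two_succ ▸ (summable_binaryValue ha).tsum_le_tsum
    (digit_div_two_pow_le ha) summable_geometric_two_succ

lemma binaryValue_eq_half_add (ha : ∀ k, a k ≤ 1) :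
    binaryValue a = a 0 / 2 + binaryValue (fun k => a (k + 1)) / 2 := by
  rw [binaryValue, (summable_binaryValue ha).tsum_eq_zero_add, binaryValue, ← tsum_div_const]
  congr 1
  · norm_num
  · congr 1
    ext k
    ring

lemma binaryValue_one_sub (ha : ∀ k, a k ≤ 1) :
    binaryValue (fun k => 1 - a k) = 1 - binaryValue a := by
  have hdigit (k : ℕ) : ((1 - a k : ℕ) : ℝ) / 2 ^ (k + 1) =
      (1 / 2 : ℝ) ^ (k + 1) - (a k : ℝ) / 2 ^ (k + 1) := by
    rw [Nat.cast_sub (ha k), div_pow, one_pow]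
    push_cast
    ring
  rw [binaryValue, funext hdigit,
    summable_geometric_two_succ.tsum_sub (summable_binaryValue ha), tsum_geometric_two_succ,
    binaryValue]

end BinaryValue

section Parity

variable (s : ℕ → ℕ) (k : ℕ)

lemma sum_range_succ_mod_two_of_even (h : s 0 % 2 = 0) :
    (∑ i ∈ range (k + 1), s i) % 2 = (∑ i ∈ range k, s (i + 1)) % 2 := by
  rw [sum_range_succ']
  omega

lemma sum_range_mod_two_shift_of_odd (h : s 0 % 2 = 1) :
    (∑ i ∈ range k, s (i + 1)) % 2 = 1 - (∑ i ∈ range (k + 1), s i) % 2 := by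
  rw [sum_range_succ']
  omega

end Parity

noncomputable def tent (x : ℝ) : ℝ := if x < 1 / 2 then 2 * x else 2 * (1 - x)

lemma tent_half {x : ℝ} (hx : x ≤ 1) : tent (x / 2) = x := by
  unfold tent
  split_ifs <;> linarith

lemma tent_one_add_half {x : ℝ} (hx : 0 ≤ x) : tent ((1 + x) / 2) = 1 - x := by
  rw [tent, if_neg (by linarith)]
  ring

theorem stmt_17_general (s : ℕ → ℕ)
    (t : (ℕ → ℕ) → ℕ → ℕ)
    (ht : ∀ s' k, t s' k = (∑ i ∈ Finset.range k, s' i) % 2)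
    (τ : (ℕ → ℕ) → ℝ)
    (hτ : ∀ s', τ s' = ∑' k : ℕ, (t s' (k + 1) : ℝ) / 2 ^ (k + 1))
    (T : ℝ → ℝ) (hT : ∀ x, T x = if x < 1 / 2 then 2 * x else 2 * (1 - x)) :
    τ (fun n => s (n + 1)) = T (τ s) := by
  have hdigit (s' : ℕ → ℕ) (k : ℕ) : t s' k ≤ 1 := by rw [ht]; omega
  set B := binaryValue fun k => t s (k + 2)
  have hτs : τ s = ((s 0 % 2 : ℕ) + B) / 2 := by
    rw [hτ, ← binaryValue, binaryValue_eq_half_add fun k => hdigit s _, ht s 1]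
    simp [B, add_div]
  rw [show T = tent from funext hT, hτs, hτ, ← binaryValue]
  rcases Nat.mod_two_eq_zero_or_one (s 0) with h | h
  · have hshift : (fun k => t (fun n => s (n + 1)) (k + 1)) = fun k => t s (k + 2) := by
      ext k
      rw [ht, ht, sum_range_succ_mod_two_of_even s _ h]
    rw [h, hshift, Nat.cast_zero, zero_add, tent_half (binaryValue_le_one fun k => hdigit s _)]
  · have hshift : (fun k => t (fun n => s (n + 1)) (k + 1)) = fun k => 1 - t s (k + 2) := by
      ext k
      rw [ht, ht, sum_range_mod_two_shift_of_odd s _ h]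
    rw [h, hshift, binaryValue_one_sub fun k => hdigit s _, Nat.cast_one,
      tent_one_add_half (binaryValue_nonneg _)]

theorem stmt_17 (s : ℕ → ℕ) (hs : ∀ i, s i ≤ 1)
    (t : (ℕ → ℕ) → ℕ → ℕ)
    (ht : ∀ s' k, t s' k = (∑ i ∈ Finset.range k, s' i) % 2)
    (τ : (ℕ → ℕ) → ℝ)
    (hτ : ∀ s', τ s' = ∑' k : ℕ, (t s' (k + 1) : ℝ) / 2 ^ (k + 1))
    (T : ℝ → ℝ) (hT : ∀ x, T x = if x < 1 / 2 then 2 * x else 2 * (1 - x)) :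
    τ (fun n => s (n + 1)) = T (τ s) :=
  stmt_17_general s t ht τ hτ T hT
end
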